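/- For real β₁, β₂ > 0 and 0 < c < 1, the multiple Meixner second-kind recurrence coefficients b_{2m} = 2m + (c/(1-c))(β₁+3m), b_{2m+1} = 2m+1 + (c/(1-c))(β₂+3m+1), c_{2m} = (c/(1-c)²)m(β₁+β₂+3m-2), c_{2m+1} = (c/(1-c)²)((m+1)β₁+m(β₂+3m+1)), d_{2m} = (c²/(1-c)³)m(m+β₁-1)(m+β₁-β₂), d_{2m+1} = (c²/(1-c)³)m(m+β₂-1)(m+β₂-β₁) are all positive for every m ≥ 1 (and b₀, c₁ > 0) if and only if -1 < β₁ - β₂ < 1. -/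

import Mathlib

/-- Multiple Meixner of the second kind recursion coefficient `b_{2m}`. -/
noncomputable def MIIb2 (β₁ β₂ c : ℝ) (m : ℕ) : ℝ :=
  2 * m + c / (1 - c) * (β₁ + 3 * m)

/-- Multiple Meixner of the second kind recursion coefficient `b_{2m+1}`. -/
noncomputable def MIIb2p1 (β₁ β₂ c : ℝ) (m : ℕ) : ℝ :=
  2 * m + 1 + c / (1 - c) * (β₂ + 3 * m + 1)

/-- Multiple Meixner of the second kind recursion coefficient `c_{2m}`. -/
noncomputable def MIIc2 (β₁ β₂ c : ℝ) (m : ℕ) : ℝ :=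
  c / (1 - c) ^ 2 * m * (β₁ + β₂ + 3 * m - 2)

/-- Multiple Meixner of the second kind recursion coefficient `c_{2m+1}`. -/
noncomputable def MIIc2p1 (β₁ β₂ c : ℝ) (m : ℕ) : ℝ :=
  c / (1 - c) ^ 2 * ((m + 1) * β₁ + m * (β₂ + 3 * m + 1))

/-- Multiple Meixner of the second kind recursion coefficient `d_{2m}`. -/
noncomputable def MIId2 (β₁ β₂ c : ℝ) (m : ℕ) : ℝ :=
  c ^ 2 / (1 - c) ^ 3 * m * (m + β₁ - 1) * (m + β₁ - β₂)

/-- Multiple Meixner of the second kind recursion coefficient `d_{2m+1}`. -/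
noncomputable def MIId2p1 (β₁ β₂ c : ℝ) (m : ℕ) : ℝ :=
  c ^ 2 / (1 - c) ^ 3 * m * (m + β₂ - 1) * (m + β₂ - β₁)


/-! For `β₁, β₂ > 0` and `0 < c < 1` every term of the `b`- and `c`-coefficients is nonnegative
and one is positive, so only the `d`-coefficients constrain the parameters. For `m ≥ 1` all their
factors but the last one, `m ± (β₁ - β₂)`, are positive; hence the `d`'s are positive exactly when
`|β₁ - β₂| < m` for every `m ≥ 1`, and the binding case is `m = 1`. -/

section Coefficients

variable {β₁ β₂ c : ℝ} {m : ℕ}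

theorem MIIb2_pos (hβ₁ : 0 < β₁) (hc0 : 0 < c) (hc1 : c < 1) (m : ℕ) : 0 < MIIb2 β₁ β₂ c m := by
  have : 0 < c / (1 - c) := div_pos hc0 (sub_pos.2 hc1)
  unfold MIIb2
  positivity

theorem MIIb2p1_pos (hβ₂ : 0 ≤ β₂) (hc0 : 0 ≤ c) (hc1 : c < 1) (m : ℕ) :
    0 < MIIb2p1 β₁ β₂ c m := by
  have : 0 ≤ c / (1 - c) := div_nonneg hc0 (sub_pos.2 hc1).le
  unfold MIIb2p1
  positivity

theorem MIIc2p1_pos (hβ₁ : 0 < β₁) (hβ₂ : 0 ≤ β₂) (hc0 : 0 < c) (hc1 : c ≠ 1) (m : ℕ) :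
    0 < MIIc2p1 β₁ β₂ c m := by
  have : 1 - c ≠ 0 := sub_ne_zero.2 hc1.symm
  unfold MIIc2p1
  positivity

theorem MIIc2_pos (hβ₁ : 0 < β₁) (hβ₂ : 0 < β₂) (hc0 : 0 < c) (hc1 : c ≠ 1) (hm : 1 ≤ m) :
    0 < MIIc2 β₁ β₂ c m := by
  have : 1 - c ≠ 0 := sub_ne_zero.2 hc1.symm
  have hm' : (1 : ℝ) ≤ m := by exact_mod_cast hm
  have : 0 < β₁ + β₂ + 3 * m - 2 := by linarith
  unfold MIIc2
  positivity

theorem MIId2_pos_iff (hβ₁ : 0 < β₁) (hc0 : 0 < c) (hc1 : c < 1) (hm : 1 ≤ m) :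
    0 < MIId2 β₁ β₂ c m ↔ β₂ - β₁ < m := by
  have : 0 < 1 - c := sub_pos.2 hc1
  have hm' : (1 : ℝ) ≤ m := by exact_mod_cast hm
  have : 0 < (m : ℝ) + β₁ - 1 := by linarith
  have hK : 0 < c ^ 2 / (1 - c) ^ 3 * m * (m + β₁ - 1) := by positivity
  rw [MIId2, mul_pos_iff_of_pos_left hK]
  constructor <;> intro h <;> linarith

theorem MIId2p1_pos_iff (hβ₂ : 0 < β₂) (hc0 : 0 < c) (hc1 : c < 1) (hm : 1 ≤ m) :
    0 < MIId2p1 β₁ β₂ c m ↔ β₁ - β₂ < m := by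
  have : 0 < 1 - c := sub_pos.2 hc1
  have hm' : (1 : ℝ) ≤ m := by exact_mod_cast hm
  have : 0 < (m : ℝ) + β₂ - 1 := by linarith
  have hK : 0 < c ^ 2 / (1 - c) ^ 3 * m * (m + β₂ - 1) := by positivity
  rw [MIId2p1, mul_pos_iff_of_pos_left hK]
  constructor <;> intro h <;> linarith

end Coefficients

theorem forall_one_le_lt_natCast_iff {x : ℝ} : (∀ m : ℕ, 1 ≤ m → x < m) ↔ x < 1 := by
  refine ⟨fun h => by exact_mod_cast h 1 le_rfl, fun h m hm => ?_⟩
  have hm' : (1 : ℝ) ≤ m := by exact_mod_cast hm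
  linarith

theorem meixner_second_kind_positivity_iff (β₁ β₂ c : ℝ)
    (hβ₁ : β₁ > 0) (hβ₂ : β₂ > 0) (hc0 : 0 < c) (hc1 : c < 1) :
    ((∀ m : ℕ, MIIb2 β₁ β₂ c m > 0 ∧ MIIb2p1 β₁ β₂ c m > 0 ∧ MIIc2p1 β₁ β₂ c m > 0) ∧
      (∀ m : ℕ, 1 ≤ m →
        MIIc2 β₁ β₂ c m > 0 ∧ MIId2 β₁ β₂ c m > 0 ∧ MIId2p1 β₁ β₂ c m > 0))
    ↔ (-1 < β₁ - β₂ ∧ β₁ - β₂ < 1) := by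
  have hb (m : ℕ) :
      MIIb2 β₁ β₂ c m > 0 ∧ MIIb2p1 β₁ β₂ c m > 0 ∧ MIIc2p1 β₁ β₂ c m > 0 :=
    ⟨MIIb2_pos hβ₁ hc0 hc1 m, MIIb2p1_pos hβ₂.le hc0.le hc1 m,
      MIIc2p1_pos hβ₁ hβ₂.le hc0 hc1.ne m⟩
  have hd (m : ℕ) (hm : 1 ≤ m) :
      (MIIc2 β₁ β₂ c m > 0 ∧ MIId2 β₁ β₂ c m > 0 ∧ MIId2p1 β₁ β₂ c m > 0) ↔ |β₁ - β₂| < m := by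
    rw [gt_iff_lt, gt_iff_lt, gt_iff_lt, and_iff_right (MIIc2_pos hβ₁ hβ₂ hc0 hc1.ne hm),
      MIId2_pos_iff hβ₁ hc0 hc1 hm, MIId2p1_pos_iff hβ₂ hc0 hc1 hm, abs_sub_lt_iff, and_comm]
  rw [and_iff_right hb, forall₂_congr hd, forall_one_le_lt_natCast_iff, abs_lt]
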